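/- arXiv:1812.11389 — 5 statements merged into one kernel-verified Lean document; each statement's English description precedes it below -/
import Mathlib

section
/- Let L₁, L₂, L₃ : ℝ³ → ℝ be linearly independent linear functionals, let U := {v ∈ ℝ³ : Lᵢ(v) ≠ 0 for i = 1,2,3}, and for ε = (ε₁,ε₂,ε₃) ∈ {−1,+1}³ let C_ε := {v ∈ ℝ³ : εᵢ·Lᵢ(v) > 0 for i = 1,2,3}. Then: (i) each C_ε is a nonempty open convex cone and the eight sets C_ε are exactly the connected components of U; and (ii) if p₁, p₂, p₃ ∈ ℝ³ are nonzero vectors with Lᵢ(pᵢ) = 0 and L_{i+1}(pᵢ) ≠ 0 ≠ L_{i+2}(pᵢ) for each i (indices mod 3), then T(L₁,L₂,L₃,p₁,p₂,p₃) > 0 if and only if there exist ε ∈ {−1,+1}³ and signs η₁, η₂, η₃ ∈ {−1,+1} such that ηᵢ·pᵢ lies in the closure of C_ε for each i = 1,2,3. -/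
/-!
(i) The functionals `Lᵢ` are independent, so `v ↦ (L₁ v, L₂ v, L₃ v)` is onto `ℝ³`: the cone `C_ε`
contains the point with `Lᵢ v = εᵢ`, and distinct sign vectors give distinct cones. Each `C_ε` is
convex, hence preconnected, and `U \ C_ε` is the open set where some `εᵢ Lᵢ` is negative, so `C_ε`
is a connected component of `U`.

(ii) Write `aᵢⱼ = Lⱼ(pᵢ)` for `i ≠ j`; the triple ratio has the sign of `∏ aᵢⱼ`. Since the closure
of `C_ε` is `{v | εⱼ Lⱼ v ≥ 0}`, the condition `ηᵢ pᵢ ∈ closure C_ε` says `εⱼ ηᵢ aᵢⱼ ≥ 0` for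
`j ≠ i`. The six pairs `(i, j)` form a hexagon in which every `εⱼ` and every `ηᵢ` occurs twice,
so the product of the six numbers `εⱼ ηᵢ aᵢⱼ` is `∏ aᵢⱼ`. Conversely, if `∏ aᵢⱼ > 0`, the signs
can be chosen edge by edge around the hexagon, and the last edge is then forced to be positive.
-/

/-- The triple ratio `T(L₁, L₂, L₃, p₁, p₂, p₃)` of three linear functionals and
three vectors on `ℝ³`. -/
noncomputable def tripleRatio (L₁ L₂ L₃ : (Fin 3 → ℝ) →ₗ[ℝ] ℝ) (p₁ p₂ p₃ : Fin 3 → ℝ) : ℝ :=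
  (L₁ p₂ * L₂ p₃ * L₃ p₁) / (L₁ p₃ * L₃ p₂ * L₂ p₁)

/-- The open cone `C_ε = {v : εᵢ · Lᵢ(v) > 0 for i = 1, 2, 3}`. -/
def signCone3 (L₁ L₂ L₃ : (Fin 3 → ℝ) →ₗ[ℝ] ℝ) (ε : Fin 3 → ℝ) : Set (Fin 3 → ℝ) :=
  {v | 0 < ε 0 * L₁ v ∧ 0 < ε 1 * L₂ v ∧ 0 < ε 2 * L₃ v}

theorem LinearIndependent.exists_forall_apply_eq {ι V : Type*} [Finite ι] [AddCommGroup V]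
    [Module ℝ V] {L : ι → V →ₗ[ℝ] ℝ} (hL : LinearIndependent ℝ L) (t : ι → ℝ) :
    ∃ v, ∀ i, L i v = t i := by
  have hcoe : LinearIndependent ℝ fun i => (L i : V → ℝ) :=
    hL.map' (LinearMap.ltoFun ℝ V ℝ ℝ) (LinearMap.ker_eq_bot.mpr DFunLike.coe_injective)
  have hrange : LinearMap.range (LinearMap.pi L) = ⊤ := by
    rw [← Submodule.span_eq (LinearMap.range _), LinearMap.coe_range]
    exact span_flip_eq_top_iff_linearIndependent.mpr hcoe
  obtain ⟨v, hv⟩ := LinearMap.range_eq_top.mp hrange t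
  exact ⟨v, fun i => congrFun hv i⟩

lemma ne_zero_of_eq_neg_one_or_eq_one {x : ℝ} (h : x = -1 ∨ x = 1) : x ≠ 0 := by
  rcases h with rfl | rfl <;> norm_num

lemma mul_self_eq_one_of_eq_neg_one_or_eq_one {x : ℝ} (h : x = -1 ∨ x = 1) : x * x = 1 := by
  rcases h with rfl | rfl <;> norm_num

lemma eq_of_mul_pos_of_eq_neg_one_or_eq_one {x y : ℝ} (hx : x = -1 ∨ x = 1)
    (hy : y = -1 ∨ y = 1) (h : 0 < x * y) : x = y := by
  rcases hx with rfl | rfl <;> rcases hy with rfl | rfl <;> linarith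

section SignCone

variable {ι V : Type*} [AddCommGroup V] [Module ℝ V]

def signCone (L : ι → V →ₗ[ℝ] ℝ) (ε : ι → ℝ) : Set V := {v | ∀ i, 0 < ε i * L i v}

variable {L : ι → V →ₗ[ℝ] ℝ} {ε : ι → ℝ}

theorem convex_signCone : Convex ℝ (signCone L ε) := by
  simp only [signCone, Set.ofPred_forall]
  exact convex_iInter fun i => convex_halfSpace_gt ((ε i • L i).isLinear) 0

theorem smul_mem_signCone {c : ℝ} (hc : 0 < c) {v : V} (hv : v ∈ signCone L ε) :
    c • v ∈ signCone L ε := fun i => by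
  simpa [mul_left_comm] using mul_pos hc (hv i)

theorem signCone_subset_nonvanishing : signCone L ε ⊆ {w | ∀ i, L i w ≠ 0} :=
  fun _ hw i h0 => by simpa [h0] using hw i

theorem mem_signCone_of_forall_apply_eq {v : V} (hε : ∀ i, ε i ≠ 0) (hv : ∀ i, L i v = ε i) :
    v ∈ signCone L ε := fun i => by
  rw [hv i]; exact mul_self_pos.mpr (hε i)

theorem signCone_nonempty [Finite ι] (hL : LinearIndependent ℝ L) (hε : ∀ i, ε i ≠ 0) :
    (signCone L ε).Nonempty :=
  (hL.exists_forall_apply_eq ε).imp fun _ hv => mem_signCone_of_forall_apply_eq hε hv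

theorem nonvanishing_eq_iUnion_signCone :
    {w | ∀ i, L i w ≠ 0} = ⋃ ε ∈ {ε : ι → ℝ | ∀ i, ε i = -1 ∨ ε i = 1}, signCone L ε := by
  refine Set.Subset.antisymm (fun w hw => ?_)
    (Set.iUnion₂_subset fun ε _ => signCone_subset_nonvanishing)
  exact Set.mem_iUnion₂.mpr ⟨fun i => Real.sign (L i w),
    fun i => Real.sign_apply_eq_of_ne_zero _ (hw i), fun i => Real.sign_mul_pos_of_ne_zero _ (hw i)⟩

theorem eq_of_signCone_eq [Finite ι] (hL : LinearIndependent ℝ L) {ε' : ι → ℝ}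
    (hε : ∀ i, ε i = -1 ∨ ε i = 1) (hε' : ∀ i, ε' i = -1 ∨ ε' i = 1)
    (h : signCone L ε = signCone L ε') : ε = ε' := by
  obtain ⟨v, hv⟩ := hL.exists_forall_apply_eq ε
  have hmem : v ∈ signCone L ε' :=
    h ▸ mem_signCone_of_forall_apply_eq (fun i => ne_zero_of_eq_neg_one_or_eq_one (hε i)) hv
  funext i
  exact (eq_of_mul_pos_of_eq_neg_one_or_eq_one (hε' i) (hε i) (hv i ▸ hmem i)).symm

variable [TopologicalSpace V]

theorem isOpen_signCone [Finite ι] (hL : ∀ i, Continuous (L i)) : IsOpen (signCone L ε) := by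
  simp only [signCone, Set.ofPred_forall]
  exact isOpen_iInter_of_finite fun i => isOpen_lt continuous_const (continuous_const.mul (hL i))

theorem closure_signCone [ContinuousAdd V] [ContinuousSMul ℝ V] (hL : ∀ i, Continuous (L i))
    (hne : (signCone L ε).Nonempty) :
    closure (signCone L ε) = {v | ∀ i, 0 ≤ ε i * L i v} := by
  refine Set.Subset.antisymm (closure_minimal (fun v hv i => (hv i).le) ?_) fun w hw => ?_
  · simp only [Set.ofPred_forall]
    exact isClosed_iInter fun i => isClosed_le continuous_const (continuous_const.mul (hL i))
  obtain ⟨v, hv⟩ := hne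
  have : openSegment ℝ v w ⊆ signCone L ε := by
    rintro _ ⟨a, b, ha, hb, -, rfl⟩ i
    simp only [map_add, map_smul, smul_eq_mul, mul_add, mul_left_comm (ε i)]
    exact add_pos_of_pos_of_nonneg (mul_pos ha (hv i)) (mul_nonneg hb.le (hw i))
  exact closure_mono this (segment_subset_closure_openSegment (right_mem_segment ℝ v w))

theorem connectedComponentIn_nonvanishing_eq_signCone [Finite ι] [IsTopologicalAddGroup V]
    [ContinuousSMul ℝ V] (hL : ∀ i, Continuous (L i)) (hε : ∀ i, ε i ≠ 0) {v : V}
    (hv : v ∈ signCone L ε) :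
    connectedComponentIn {w | ∀ i, L i w ≠ 0} v = signCone L ε := by
  refine Set.Subset.antisymm ?_
    (convex_signCone.isPreconnected.subset_connectedComponentIn hv signCone_subset_nonvanishing)
  set W := ⋃ i, {w : V | ε i * L i w < 0}
  have hW : IsOpen W :=
    isOpen_iUnion fun i => isOpen_lt (continuous_const.mul (hL i)) continuous_const
  have hdisj : Disjoint (signCone L ε) W := by
    refine Set.disjoint_left.mpr fun w hw hwW => ?_
    obtain ⟨i, hi⟩ := Set.mem_iUnion.mp hwW
    exact (hw i).not_gt hi
  have hcover : {w | ∀ i, L i w ≠ 0} ⊆ signCone L ε ∪ W := by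
    intro w hw
    by_cases h : ∀ i, 0 < ε i * L i w
    · exact Or.inl h
    obtain ⟨i, hi⟩ := not_forall.mp h
    exact Or.inr (Set.mem_iUnion.mpr ⟨i, (le_of_not_gt hi).lt_of_ne (mul_ne_zero (hε i) (hw i))⟩)
  exact isPreconnected_connectedComponentIn.subset_left_of_subset_union (isOpen_signCone hL) hW
    hdisj ((connectedComponentIn_subset _ _).trans hcover)
    ⟨v, mem_connectedComponentIn (signCone_subset_nonvanishing hv), hv⟩

end SignCone

section Hexagon

variable {a₁₂ a₁₃ a₂₁ a₂₃ a₃₁ a₃₂ : ℝ}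

theorem hexagon_prod_eq {ε : Fin 3 → ℝ} {η₁ η₂ η₃ : ℝ} (hε : ∀ i, ε i = -1 ∨ ε i = 1)
    (hη₁ : η₁ = -1 ∨ η₁ = 1) (hη₂ : η₂ = -1 ∨ η₂ = 1) (hη₃ : η₃ = -1 ∨ η₃ = 1) :
    ε 1 * (η₁ * a₁₂) * (ε 2 * (η₁ * a₁₃)) * (ε 0 * (η₂ * a₂₁)) * (ε 2 * (η₂ * a₂₃)) *
      (ε 0 * (η₃ * a₃₁)) * (ε 1 * (η₃ * a₃₂)) = a₁₂ * a₁₃ * a₂₁ * a₂₃ * a₃₁ * a₃₂ := by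
  have key : ε 1 * (η₁ * a₁₂) * (ε 2 * (η₁ * a₁₃)) * (ε 0 * (η₂ * a₂₁)) * (ε 2 * (η₂ * a₂₃)) *
      (ε 0 * (η₃ * a₃₁)) * (ε 1 * (η₃ * a₃₂)) = (ε 0 * ε 0) * (ε 1 * ε 1) * (ε 2 * ε 2) *
        (η₁ * η₁) * (η₂ * η₂) * (η₃ * η₃) * (a₁₂ * a₁₃ * a₂₁ * a₂₃ * a₃₁ * a₃₂) := by ring
  simp only [key, mul_self_eq_one_of_eq_neg_one_or_eq_one, hε, hη₁, hη₂, hη₃, one_mul]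

theorem exists_hexagon_signs (h₁₂ : a₁₂ ≠ 0) (h₁₃ : a₁₃ ≠ 0) (h₂₁ : a₂₁ ≠ 0) (h₂₃ : a₂₃ ≠ 0)
    (h₃₁ : a₃₁ ≠ 0) (hP : 0 < a₁₂ * a₁₃ * a₂₁ * a₂₃ * a₃₁ * a₃₂) :
    ∃ ε : Fin 3 → ℝ, (∀ i, ε i = -1 ∨ ε i = 1) ∧
      ∃ η₁ η₂ η₃ : ℝ, (η₁ = -1 ∨ η₁ = 1) ∧ (η₂ = -1 ∨ η₂ = 1) ∧ (η₃ = -1 ∨ η₃ = 1) ∧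
        (0 ≤ ε 1 * (η₁ * a₁₂) ∧ 0 ≤ ε 2 * (η₁ * a₁₃)) ∧
        (0 ≤ ε 0 * (η₂ * a₂₁) ∧ 0 ≤ ε 2 * (η₂ * a₂₃)) ∧
        (0 ≤ ε 0 * (η₃ * a₃₁) ∧ 0 ≤ ε 1 * (η₃ * a₃₂)) := by
  set η₂ := Real.sign (Real.sign a₁₃ * a₂₃)
  set ε₀ := Real.sign (η₂ * a₂₁)
  set η₃ := Real.sign (ε₀ * a₃₁)
  have hη₂ : η₂ = -1 ∨ η₂ = 1 :=
    Real.sign_apply_eq_of_ne_zero _ (mul_ne_zero (Real.sign_eq_zero_iff.not.mpr h₁₃) h₂₃)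
  have hε₀ : ε₀ = -1 ∨ ε₀ = 1 :=
    Real.sign_apply_eq_of_ne_zero _ (mul_ne_zero (ne_zero_of_eq_neg_one_or_eq_one hη₂) h₂₁)
  have hη₃ : η₃ = -1 ∨ η₃ = 1 :=
    Real.sign_apply_eq_of_ne_zero _ (mul_ne_zero (ne_zero_of_eq_neg_one_or_eq_one hε₀) h₃₁)
  have hε : ∀ i, ![ε₀, Real.sign a₁₂, Real.sign a₁₃] i = -1 ∨
      ![ε₀, Real.sign a₁₂, Real.sign a₁₃] i = 1 := by
    intro i
    fin_cases i
    exacts [hε₀, Real.sign_apply_eq_of_ne_zero _ h₁₂, Real.sign_apply_eq_of_ne_zero _ h₁₃]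
  have g₁₂ : 0 ≤ Real.sign a₁₂ * (1 * a₁₂) := by simpa using Real.sign_mul_nonneg a₁₂
  have g₁₃ : 0 ≤ Real.sign a₁₃ * (1 * a₁₃) := by simpa using Real.sign_mul_nonneg a₁₃
  have g₂₁ : 0 ≤ ε₀ * (η₂ * a₂₁) := Real.sign_mul_nonneg _
  have g₂₃ : 0 ≤ Real.sign a₁₃ * (η₂ * a₂₃) := by
    rw [mul_left_comm]; exact Real.sign_mul_nonneg _
  have g₃₁ : 0 ≤ ε₀ * (η₃ * a₃₁) := by
    rw [mul_left_comm]; exact Real.sign_mul_nonneg _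
  have g₃₂ : 0 ≤ Real.sign a₁₂ * (η₃ * a₃₂) := by
    rw [← hexagon_prod_eq hε (Or.inr rfl) hη₂ hη₃] at hP
    refine (pos_of_mul_pos_right hP ?_).le
    exact mul_nonneg (mul_nonneg (mul_nonneg (mul_nonneg g₁₂ g₁₃) g₂₁) g₂₃) g₃₁
  exact ⟨_, hε, 1, η₂, η₃, Or.inr rfl, hη₂, hη₃, ⟨g₁₂, g₁₃⟩, ⟨g₂₁, g₂₃⟩, ⟨g₃₁, g₃₂⟩⟩

theorem hexagon_sign_condition_iff (h₁₂ : a₁₂ ≠ 0) (h₁₃ : a₁₃ ≠ 0) (h₂₁ : a₂₁ ≠ 0)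
    (h₂₃ : a₂₃ ≠ 0) (h₃₁ : a₃₁ ≠ 0) (h₃₂ : a₃₂ ≠ 0) :
    (∃ ε : Fin 3 → ℝ, (∀ i, ε i = -1 ∨ ε i = 1) ∧
      ∃ η₁ η₂ η₃ : ℝ, (η₁ = -1 ∨ η₁ = 1) ∧ (η₂ = -1 ∨ η₂ = 1) ∧ (η₃ = -1 ∨ η₃ = 1) ∧
        (0 ≤ ε 1 * (η₁ * a₁₂) ∧ 0 ≤ ε 2 * (η₁ * a₁₃)) ∧
        (0 ≤ ε 0 * (η₂ * a₂₁) ∧ 0 ≤ ε 2 * (η₂ * a₂₃)) ∧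
        (0 ≤ ε 0 * (η₃ * a₃₁) ∧ 0 ≤ ε 1 * (η₃ * a₃₂))) ↔
      0 < a₁₂ * a₁₃ * a₂₁ * a₂₃ * a₃₁ * a₃₂ := by
  refine ⟨?_, exists_hexagon_signs h₁₂ h₁₃ h₂₁ h₂₃ h₃₁⟩
  rintro ⟨ε, hε, η₁, η₂, η₃, hη₁, hη₂, hη₃, ⟨g₁₂, g₁₃⟩, ⟨g₂₁, g₂₃⟩, ⟨g₃₁, g₃₂⟩⟩
  have hP : 0 ≤ a₁₂ * a₁₃ * a₂₁ * a₂₃ * a₃₁ * a₃₂ := by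
    rw [← hexagon_prod_eq hε hη₁ hη₂ hη₃]
    exact mul_nonneg (mul_nonneg (mul_nonneg (mul_nonneg (mul_nonneg g₁₂ g₁₃) g₂₁) g₂₃) g₃₁) g₃₂
  exact hP.lt_of_ne (by simp [h₁₂, h₁₃, h₂₁, h₂₃, h₃₁, h₃₂])

end Hexagon

lemma tripleRatio_pos_iff (L₁ L₂ L₃ : (Fin 3 → ℝ) →ₗ[ℝ] ℝ) (p₁ p₂ p₃ : Fin 3 → ℝ) :
    0 < tripleRatio L₁ L₂ L₃ p₁ p₂ p₃ ↔
      0 < L₂ p₁ * L₃ p₁ * L₁ p₂ * L₃ p₂ * L₁ p₃ * L₂ p₃ := by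
  rw [tripleRatio, div_pos_iff, ← mul_pos_iff]
  ring_nf

lemma signCone3_eq_signCone (L₁ L₂ L₃ : (Fin 3 → ℝ) →ₗ[ℝ] ℝ) (ε : Fin 3 → ℝ) :
    signCone3 L₁ L₂ L₃ ε = signCone ![L₁, L₂, L₃] ε := by
  ext v
  simp [signCone3, signCone, Fin.forall_fin_succ]

theorem stmt3 (L₁ L₂ L₃ : (Fin 3 → ℝ) →ₗ[ℝ] ℝ)
    (hLI : LinearIndependent ℝ ![L₁, L₂, L₃]) :
    -- (i) each `C_ε` is a nonempty open convex cone, the cones `C_ε` are exactly the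
    -- connected components of `U`, they exhaust `U`, and they are pairwise distinct,
    -- so `U` has exactly eight connected components.
    ((∀ ε : Fin 3 → ℝ, (∀ i, ε i = -1 ∨ ε i = 1) →
        (signCone3 L₁ L₂ L₃ ε).Nonempty ∧
        IsOpen (signCone3 L₁ L₂ L₃ ε) ∧
        Convex ℝ (signCone3 L₁ L₂ L₃ ε) ∧
        (∀ c : ℝ, 0 < c → ∀ v ∈ signCone3 L₁ L₂ L₃ ε, c • v ∈ signCone3 L₁ L₂ L₃ ε) ∧
        (∀ v ∈ signCone3 L₁ L₂ L₃ ε,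
          connectedComponentIn {w : Fin 3 → ℝ | L₁ w ≠ 0 ∧ L₂ w ≠ 0 ∧ L₃ w ≠ 0} v =
            signCone3 L₁ L₂ L₃ ε)) ∧
      ({w : Fin 3 → ℝ | L₁ w ≠ 0 ∧ L₂ w ≠ 0 ∧ L₃ w ≠ 0} =
        ⋃ ε ∈ {ε : Fin 3 → ℝ | ∀ i, ε i = -1 ∨ ε i = 1}, signCone3 L₁ L₂ L₃ ε) ∧
      (∀ ε ε' : Fin 3 → ℝ, (∀ i, ε i = -1 ∨ ε i = 1) → (∀ i, ε' i = -1 ∨ ε' i = 1) →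
        signCone3 L₁ L₂ L₃ ε = signCone3 L₁ L₂ L₃ ε' → ε = ε')) ∧
    -- (ii) positivity of the triple ratio for a triple of flags is equivalent to the
    -- three projective points lying in the closure of a common cone `C_ε`.
    (∀ p₁ p₂ p₃ : Fin 3 → ℝ, p₁ ≠ 0 → p₂ ≠ 0 → p₃ ≠ 0 →
      L₁ p₁ = 0 → L₂ p₂ = 0 → L₃ p₃ = 0 →
      L₂ p₁ ≠ 0 → L₃ p₁ ≠ 0 → L₃ p₂ ≠ 0 → L₁ p₂ ≠ 0 → L₁ p₃ ≠ 0 → L₂ p₃ ≠ 0 →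
      (0 < tripleRatio L₁ L₂ L₃ p₁ p₂ p₃ ↔
        ∃ ε : Fin 3 → ℝ, (∀ i, ε i = -1 ∨ ε i = 1) ∧
          ∃ η₁ η₂ η₃ : ℝ, (η₁ = -1 ∨ η₁ = 1) ∧ (η₂ = -1 ∨ η₂ = 1) ∧ (η₃ = -1 ∨ η₃ = 1) ∧
            η₁ • p₁ ∈ closure (signCone3 L₁ L₂ L₃ ε) ∧
            η₂ • p₂ ∈ closure (signCone3 L₁ L₂ L₃ ε) ∧
            η₃ • p₃ ∈ closure (signCone3 L₁ L₂ L₃ ε))) := by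
  have hcont : ∀ i, Continuous (![L₁, L₂, L₃] i) := fun i =>
    LinearMap.continuous_of_finiteDimensional _
  have hU : {w : Fin 3 → ℝ | L₁ w ≠ 0 ∧ L₂ w ≠ 0 ∧ L₃ w ≠ 0} =
      {w | ∀ i, ![L₁, L₂, L₃] i w ≠ 0} := by
    ext; simp [Fin.forall_fin_succ]
  have hne : ∀ ε : Fin 3 → ℝ, (∀ i, ε i = -1 ∨ ε i = 1) → (signCone ![L₁, L₂, L₃] ε).Nonempty :=
    fun ε hε => signCone_nonempty hLI fun i => ne_zero_of_eq_neg_one_or_eq_one (hε i)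
  simp only [signCone3_eq_signCone, hU]
  refine ⟨⟨fun ε hε => ⟨hne ε hε, isOpen_signCone hcont, convex_signCone,
    fun c hc v hv => smul_mem_signCone hc hv, fun v hv =>
      connectedComponentIn_nonvanishing_eq_signCone hcont
        (fun i => ne_zero_of_eq_neg_one_or_eq_one (hε i)) hv⟩,
    nonvanishing_eq_iUnion_signCone, fun ε ε' hε hε' => eq_of_signCone_eq hLI hε hε'⟩, ?_⟩
  intro p₁ p₂ p₃ _ _ _ h₁ h₂ h₃ h₁₂ h₁₃ h₂₃ h₂₁ h₃₁ h₃₂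
  rw [tripleRatio_pos_iff, ← hexagon_sign_condition_iff h₁₂ h₁₃ h₂₁ h₂₃ h₃₁ h₃₂]
  refine exists_congr fun ε => and_congr_right fun hε => ?_
  simp [closure_signCone hcont (hne ε hε), Fin.forall_fin_succ, h₁, h₂, h₃]
end

section
/- Let n ≥ 1 and 1 ≤ m ≤ n. Let (L_i) be a sequence of continuous linear endomorphisms of the Euclidean space ℝⁿ converging (in operator norm) to an endomorphism L, and for each j ∈ {1,…,m} let (λ_i^j)_i be a sequence of real numbers converging to a real number λ^j. Set K_i := ker ∏_{j=1}^m (L_i − λ_i^j·id) and K := ker ∏_{j=1}^m (L − λ^j·id), where the product denotes composition of the maps. If dim K_i = m for every i and dim K = m, then the orthogonal projections of ℝⁿ onto K_i converge in operator norm to the orthogonal projection of ℝⁿ onto K. -/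
open Filter Topology

/-- The kernel of the (composition) product `∏_{j} (T - μⱼ · id)` of shifted endomorphisms of
Euclidean `ℝⁿ`. -/
noncomputable def polyKer {n : ℕ} (m : ℕ)
    (T : EuclideanSpace ℝ (Fin n) →L[ℝ] EuclideanSpace ℝ (Fin n)) (μ : Fin m → ℝ) :
    Submodule ℝ (EuclideanSpace ℝ (Fin n)) :=
  LinearMap.ker
    (((List.ofFn fun j : Fin m =>
      T - μ j • (1 : EuclideanSpace ℝ (Fin n) →L[ℝ] EuclideanSpace ℝ (Fin n))).prod :
      EuclideanSpace ℝ (Fin n) →ₗ[ℝ] EuclideanSpace ℝ (Fin n)))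

/-- The orthogonal projection onto a subspace `K` of Euclidean `ℝⁿ`, viewed as a continuous
linear endomorphism of `ℝⁿ`. -/
noncomputable def orthProj {n : ℕ} (K : Submodule ℝ (EuclideanSpace ℝ (Fin n))) :
    EuclideanSpace ℝ (Fin n) →L[ℝ] EuclideanSpace ℝ (Fin n) :=
  K.subtypeL.comp K.orthogonalProjection

/-!
The orthogonal projections onto the `K_i` lie in the compact unit ball of `End(ℝⁿ)`, so it
suffices to identify every cluster point `P`. As a limit of orthogonal projections, `P` is an
orthogonal projection; it is killed by the limit product `∏ⱼ (L - λʲ)` because each product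
kills the projection onto its own kernel, so `range P ≤ K`; and `rank P = trace P = m` by
continuity of the trace. Hence `range P = K` and `P` is the projection onto `K`.
-/

open Module

theorem isClosed_setOf_isStarProjection {R : Type*} [Mul R] [Star R] [TopologicalSpace R]
    [ContinuousMul R] [ContinuousStar R] [T2Space R] :
    IsClosed {p : R | IsStarProjection p} := by
  have h : {p : R | IsStarProjection p} = {p | p * p = p} ∩ {p | star p = p} := by
    ext p
    exact ⟨fun hp => ⟨hp.isIdempotentElem, hp.isSelfAdjoint⟩, fun hp => ⟨hp.1, hp.2⟩⟩
  rw [h]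
  exact (isClosed_eq (continuous_id.mul continuous_id) continuous_id).inter
    (isClosed_eq continuous_star continuous_id)

section

variable {𝕜 E : Type*} [RCLike 𝕜] [NormedAddCommGroup E] [InnerProductSpace 𝕜 E]
  [FiniteDimensional 𝕜 E]

theorem Submodule.trace_starProjection (K : Submodule 𝕜 E) :
    LinearMap.trace 𝕜 E K.starProjection = finrank 𝕜 K :=
  LinearMap.IsProj.trace ⟨K.starProjection_apply_mem, fun _ => K.starProjection_eq_self_iff.mpr⟩

theorem eq_starProjection_of_tendsto {ι : Type*} {l : Filter ι} [l.NeBot]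
    {K : ι → Submodule 𝕜 E} {K₀ : Submodule 𝕜 E} {A : ι → E →L[𝕜] E} {A₀ : E →L[𝕜] E}
    {P : E →L[𝕜] E} (hA : Tendsto A l (𝓝 A₀))
    (hKA : ∀ i, K i ≤ LinearMap.ker (A i : E →ₗ[𝕜] E))
    (hK₀ : LinearMap.ker (A₀ : E →ₗ[𝕜] E) ≤ K₀) (hdim : ∀ i, finrank 𝕜 (K i) = finrank 𝕜 K₀)
    (hP : Tendsto (fun i => (K i).starProjection) l (𝓝 P)) :
    P = K₀.starProjection := by
  have : CompleteSpace E := FiniteDimensional.complete 𝕜 E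
  obtain ⟨_, hP_eq⟩ := isStarProjection_iff_eq_starProjection_range.mp <|
    isClosed_setOf_isStarProjection.mem_of_tendsto hP
      (Eventually.of_forall fun i => isStarProjection_starProjection)
  have hAP : A₀ * P = 0 := by
    refine tendsto_nhds_unique (hA.mul hP) (tendsto_const_nhds.congr fun i => ?_)
    ext x
    exact (hKA i ((K i).starProjection_apply_mem x)).symm
  have hrange_le : P.range ≤ K₀ := by
    rintro _ ⟨x, rfl⟩
    exact hK₀ (congrArg (fun T : E →L[𝕜] E => T x) hAP)
  have htrace : LinearMap.trace 𝕜 E P = finrank 𝕜 K₀ := by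
    have htr : Continuous fun T : E →L[𝕜] E => LinearMap.trace 𝕜 E T :=
      ((LinearMap.trace 𝕜 E).comp (ContinuousLinearMap.coeLM 𝕜)).continuous_of_finiteDimensional
    refine tendsto_nhds_unique ((htr.tendsto P).comp hP) (tendsto_const_nhds.congr fun i => ?_)
    simp [Submodule.trace_starProjection, hdim i]
  have hrange : P.range = K₀ := by
    refine Submodule.eq_of_le_of_finrank_eq hrange_le ?_
    rw [hP_eq, Submodule.trace_starProjection] at htrace
    exact_mod_cast htrace
  subst hrange
  exact hP_eq

theorem tendsto_starProjection_of_le_ker {K : ℕ → Submodule 𝕜 E} {K₀ : Submodule 𝕜 E}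
    {A : ℕ → E →L[𝕜] E} {A₀ : E →L[𝕜] E} (hA : Tendsto A atTop (𝓝 A₀))
    (hKA : ∀ i, K i ≤ LinearMap.ker (A i : E →ₗ[𝕜] E))
    (hK₀ : LinearMap.ker (A₀ : E →ₗ[𝕜] E) ≤ K₀)
    (hdim : ∀ i, finrank 𝕜 (K i) = finrank 𝕜 K₀) :
    Tendsto (fun i => (K i).starProjection) atTop (𝓝 K₀.starProjection) := by
  have : ProperSpace (E →L[𝕜] E) := FiniteDimensional.proper 𝕜 _
  refine (isCompact_closedBall (0 : E →L[𝕜] E) 1).tendsto_nhds_of_unique_mapClusterPt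
    (Eventually.of_forall fun i => ?_) fun P _ hP => ?_
  · simpa using (K i).starProjection_norm_le
  · obtain ⟨ψ, hψ, hPψ⟩ := hP.tendsto_subseq
    exact eq_starProjection_of_tendsto (hA.comp hψ.tendsto_atTop) (fun i => hKA (ψ i)) hK₀
      (fun i => hdim (ψ i)) hPψ

end

theorem tendsto_list_prod_ofFn {M ι : Type*} [Monoid M] [TopologicalSpace M] [ContinuousMul M]
    {l : Filter ι} {m : ℕ} {f : ι → Fin m → M} {g : Fin m → M}
    (hf : ∀ j, Tendsto (fun i => f i j) l (𝓝 (g j))) :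
    Tendsto (fun i => (List.ofFn (f i)).prod) l (𝓝 (List.ofFn g).prod) := by
  simp only [List.ofFn_eq_map]
  exact tendsto_list_prod _ fun j _ => hf j

theorem stmt4_general (n m : ℕ)
    (L : ℕ → EuclideanSpace ℝ (Fin n) →L[ℝ] EuclideanSpace ℝ (Fin n))
    (Llim : EuclideanSpace ℝ (Fin n) →L[ℝ] EuclideanSpace ℝ (Fin n))
    (hL : Tendsto L atTop (𝓝 Llim))
    (lam : ℕ → Fin m → ℝ) (lamlim : Fin m → ℝ)
    (hlam : ∀ j : Fin m, Tendsto (fun i => lam i j) atTop (𝓝 (lamlim j)))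
    (hdim : ∀ i, Module.finrank ℝ (polyKer m (L i) (lam i)) = m)
    (hdimlim : Module.finrank ℝ (polyKer m Llim lamlim) = m) :
    Tendsto (fun i => orthProj (polyKer m (L i) (lam i))) atTop
      (𝓝 (orthProj (polyKer m Llim lamlim))) :=
  -- `orthProj K` is `K.starProjection` and `polyKer` is the kernel of the product, by `rfl`.
  tendsto_starProjection_of_le_ker
    (tendsto_list_prod_ofFn fun j => hL.sub ((hlam j).smul_const 1))
    (fun _ => le_rfl) le_rfl (fun i => (hdim i).trans hdimlim.symm)

theorem stmt4 (n m : ℕ) (hn : 1 ≤ n) (hm : 1 ≤ m) (hmn : m ≤ n)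
    (L : ℕ → EuclideanSpace ℝ (Fin n) →L[ℝ] EuclideanSpace ℝ (Fin n))
    (Llim : EuclideanSpace ℝ (Fin n) →L[ℝ] EuclideanSpace ℝ (Fin n))
    (hL : Tendsto L atTop (𝓝 Llim))
    (lam : ℕ → Fin m → ℝ) (lamlim : Fin m → ℝ)
    (hlam : ∀ j : Fin m, Tendsto (fun i => lam i j) atTop (𝓝 (lamlim j)))
    (hdim : ∀ i, Module.finrank ℝ (polyKer m (L i) (lam i)) = m)
    (hdimlim : Module.finrank ℝ (polyKer m Llim lamlim) = m) :
    Tendsto (fun i => orthProj (polyKer m (L i) (lam i))) atTop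
      (𝓝 (orthProj (polyKer m Llim lamlim))) :=
  stmt4_general n m L Llim hL lam lamlim hlam hdim hdimlim
end

section
/- Let f : ℝ → ℝ be given by f(s) = (eˢ − 1)/(eˢ + 1), let 𝕊 := ℝ/2πℤ (the additive circle of circumference 2π, with its cosine and sine functions), and let E₁ := {(x,y,z,w) ∈ ℝ⁴ : (x,y) ≠ (0,0)}. Then the map F₁ : ℝ × 𝕊 × (0,∞) × (0,∞) → ℝ⁴ defined by F₁(a₁, θ, a₃, a₄) = ( a₃a₄·cos((π/2)·f(a₁))·cos θ, a₃a₄·cos((π/2)·f(a₁))·sin θ, a₃a₄·sin((π/2)·f(a₁)), a₃² − a₄² ) is a homeomorphism onto E₁; that is, F₁ is a continuous bijection from ℝ × 𝕊 × (0,∞) × (0,∞) onto E₁ whose inverse is continuous. -/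
open Real

/-- The function `f(s) = (eˢ - 1)/(eˢ + 1)`. -/
noncomputable def fBulge (s : ℝ) : ℝ := (Real.exp s - 1) / (Real.exp s + 1)

/-- `E₁ = {(x,y,z,w) ∈ ℝ⁴ : (x,y) ≠ (0,0)}`. -/
def E₁ : Set (ℝ × ℝ × ℝ × ℝ) := {p | (p.1, p.2.1) ≠ (0, 0)}

/-- The map `F₁(a₁, θ, a₃, a₄)` of Lemma 4.2. Here `𝕊 = ℝ/2πℤ` is `Real.Angle`. -/
noncomputable def F₁ : ℝ × Real.Angle × Set.Ioi (0 : ℝ) × Set.Ioi (0 : ℝ) → ℝ × ℝ × ℝ × ℝ :=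
  fun x =>
    ((x.2.2.1 : ℝ) * (x.2.2.2 : ℝ) * Real.cos ((π / 2) * fBulge x.1) * x.2.1.cos,
     (x.2.2.1 : ℝ) * (x.2.2.2 : ℝ) * Real.cos ((π / 2) * fBulge x.1) * x.2.1.sin,
     (x.2.2.1 : ℝ) * (x.2.2.2 : ℝ) * Real.sin ((π / 2) * fBulge x.1),
     (x.2.2.1 : ℝ) ^ 2 - (x.2.2.2 : ℝ) ^ 2)

/-!
The map `F₁` is a composite of four homeomorphisms and some reshuffling of factors.
The bulge reparametrization `a₁ ↦ φ = (π/2) f(a₁)` is a strictly increasing bijection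
`ℝ → (-π/2, π/2)`, hence an order isomorphism. After swapping and rescaling coordinates,
`(a₃, a₄) ↦ (a₃a₄, a₃² - a₄²)` is squaring `a₃ + i a₄ ↦ (a₃ + i a₄)²` from the open first
quadrant onto the upper half-plane; its inverse is the principal square root, written out in
real coordinates. Polar coordinates `(φ, p) ↦ (p cos φ, p sin φ)` identify
`(-π/2, π/2) × (0, ∞)` with the right half-plane, the latitude being recovered by `arctan`,
and `(R, θ) ↦ (R cos θ, R sin θ)` identifies `(0, ∞) × 𝕊` with `ℝ² ∖ {0}`, the longitude being
recovered as the argument of `x + iy`. With `p = a₃a₄` and `R = p cos φ` the composite is `F₁`.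
-/

open Set

lemma fBulge_eq_one_sub (s : ℝ) : fBulge s = 1 - 2 / (exp s + 1) := by
  have : exp s + 1 ≠ 0 := by positivity
  rw [fBulge]
  field_simp
  ring

lemma fBulge_mem_Ioo (s : ℝ) : fBulge s ∈ Ioo (-1 : ℝ) 1 := by
  have h : 0 < exp s + 1 := by positivity
  rw [fBulge_eq_one_sub, mem_Ioo]
  constructor
  · have : 2 / (exp s + 1) < 2 := by
      rw [div_lt_iff₀ h]
      nlinarith [exp_pos s]
    linarith
  · have : 0 < 2 / (exp s + 1) := by positivity
    linarith

lemma strictMono_fBulge : StrictMono fBulge := by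
  intro s t hst
  rw [fBulge_eq_one_sub, fBulge_eq_one_sub, sub_lt_sub_iff_left]
  gcongr

lemma fBulge_log_div {t : ℝ} (ht : t ∈ Ioo (-1 : ℝ) 1) :
    fBulge (log ((1 + t) / (1 - t))) = t := by
  obtain ⟨h₁, h₂⟩ := ht
  have h₁' : 0 < 1 + t := by linarith
  have h₂' : 0 < 1 - t := by linarith
  rw [fBulge, exp_log (by positivity)]
  field_simp
  ring

lemma pi_div_two_mul_fBulge_mem_Ioo (s : ℝ) : π / 2 * fBulge s ∈ Ioo (-(π / 2)) (π / 2) := by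
  obtain ⟨h₁, h₂⟩ := fBulge_mem_Ioo s
  have := pi_pos
  constructor <;> nlinarith

lemma surjective_pi_div_two_mul_fBulge :
    Function.Surjective fun s =>
      (⟨π / 2 * fBulge s, pi_div_two_mul_fBulge_mem_Ioo s⟩ : Ioo (-(π / 2)) (π / 2)) := by
  rintro ⟨φ, hφ₁, hφ₂⟩
  have := pi_pos
  have ht : 2 * φ / π ∈ Ioo (-1 : ℝ) 1 :=
    ⟨by rw [lt_div_iff₀ this]; linarith, by rw [div_lt_iff₀ this]; linarith⟩
  refine ⟨log ((1 + 2 * φ / π) / (1 - 2 * φ / π)), Subtype.ext ?_⟩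
  simp only [fBulge_log_div ht]
  field_simp

noncomputable def bulgeAngleHomeomorph : ℝ ≃ₜ Ioo (-(π / 2)) (π / 2) :=
  (StrictMono.orderIsoOfSurjective (fun s => ⟨π / 2 * fBulge s, pi_div_two_mul_fBulge_mem_Ioo s⟩)
    (fun _ _ hst => mul_lt_mul_of_pos_left (strictMono_fBulge hst) (by positivity))
    surjective_pi_div_two_mul_fBulge).toHomeomorph

lemma abs_le_sqrt_sq_add_four_mul_sq (p w : ℝ) : |w| ≤ √(w ^ 2 + 4 * p ^ 2) :=
  abs_le_sqrt (le_add_of_nonneg_right (by positivity))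

lemma abs_lt_sqrt_sq_add_four_mul_sq {p : ℝ} (hp : p ≠ 0) (w : ℝ) :
    |w| < √(w ^ 2 + 4 * p ^ 2) := by
  rw [← sqrt_sq_eq_abs]
  exact sqrt_lt_sqrt (sq_nonneg w) (lt_add_of_pos_right _ (by positivity))

lemma sqrt_half_add_pos {p : ℝ} (hp : p ≠ 0) (w : ℝ) :
    0 < √((√(w ^ 2 + 4 * p ^ 2) + w) / 2) :=
  sqrt_pos.2 (by linarith [abs_lt.1 (abs_lt_sqrt_sq_add_four_mul_sq hp w)])

lemma sqrt_half_sub_pos {p : ℝ} (hp : p ≠ 0) (w : ℝ) :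
    0 < √((√(w ^ 2 + 4 * p ^ 2) - w) / 2) :=
  sqrt_pos.2 (by linarith [abs_lt.1 (abs_lt_sqrt_sq_add_four_mul_sq hp w)])

lemma sqrt_sq_sub_sq_add_four_mul_sq (a b : ℝ) :
    √((a ^ 2 - b ^ 2) ^ 2 + 4 * (a * b) ^ 2) = a ^ 2 + b ^ 2 := by
  rw [show (a ^ 2 - b ^ 2) ^ 2 + 4 * (a * b) ^ 2 = (a ^ 2 + b ^ 2) ^ 2 by ring]
  exact sqrt_sq (by positivity)

lemma sqrt_half_add_mul_sqrt_half_sub {p : ℝ} (hp : 0 ≤ p) (w : ℝ) :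
    √((√(w ^ 2 + 4 * p ^ 2) + w) / 2) * √((√(w ^ 2 + 4 * p ^ 2) - w) / 2) = p := by
  have hw := abs_le.1 (abs_le_sqrt_sq_add_four_mul_sq p w)
  have hs := sq_sqrt (show 0 ≤ w ^ 2 + 4 * p ^ 2 by positivity)
  calc _ = √(p ^ 2) := by
        rw [← sqrt_mul' _ (by linarith)]
        congr 1
        linear_combination hs / 4
    _ = p := sqrt_sq hp

lemma sq_sqrt_half_add_sub_sq_sqrt_half_sub (p w : ℝ) :
    √((√(w ^ 2 + 4 * p ^ 2) + w) / 2) ^ 2 - √((√(w ^ 2 + 4 * p ^ 2) - w) / 2) ^ 2 = w := by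
  have hw := abs_le.1 (abs_le_sqrt_sq_add_four_mul_sq p w)
  rw [sq_sqrt (by linarith), sq_sqrt (by linarith)]
  ring

noncomputable def mulSqSubSqHomeomorph : Ioi (0 : ℝ) × Ioi (0 : ℝ) ≃ₜ Ioi (0 : ℝ) × ℝ where
  toFun x := (⟨x.1 * x.2, mem_Ioi.2 (mul_pos x.1.2 x.2.2)⟩, (x.1 : ℝ) ^ 2 - (x.2 : ℝ) ^ 2)
  invFun y := (⟨_, sqrt_half_add_pos (mem_Ioi.1 y.1.2).ne' y.2⟩,
    ⟨_, sqrt_half_sub_pos (mem_Ioi.1 y.1.2).ne' y.2⟩)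
  left_inv := by
    rintro ⟨⟨a, ha⟩, ⟨b, hb⟩⟩
    ext
    · simp only [sqrt_sq_sub_sq_add_four_mul_sq]
      rw [show (a ^ 2 + b ^ 2 + (a ^ 2 - b ^ 2)) / 2 = a ^ 2 by ring, sqrt_sq (le_of_lt ha)]
    · simp only [sqrt_sq_sub_sq_add_four_mul_sq]
      rw [show (a ^ 2 + b ^ 2 - (a ^ 2 - b ^ 2)) / 2 = b ^ 2 by ring, sqrt_sq (le_of_lt hb)]
  right_inv := by
    rintro ⟨⟨p, hp⟩, w⟩
    ext
    · exact sqrt_half_add_mul_sqrt_half_sub (le_of_lt hp) w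
    · exact sq_sqrt_half_add_sub_sq_sqrt_half_sub p w
  continuous_toFun := .prodMk (.subtype_mk (by fun_prop) _) (by fun_prop)
  continuous_invFun := .prodMk (.subtype_mk (by fun_prop) _) (.subtype_mk (by fun_prop) _)

lemma sqrt_sq_add_sq_eq_mul_sqrt_one_add {R : ℝ} (hR : 0 < R) (z : ℝ) :
    √(R ^ 2 + z ^ 2) = R * √(1 + (z / R) ^ 2) := by
  rw [← sqrt_sq hR.le, ← sqrt_mul (sq_nonneg R), sqrt_sq hR.le]
  congr 1
  field_simp

lemma sqrt_mul_cos_sq_add_mul_sin_sq {p : ℝ} (hp : 0 ≤ p) (φ : ℝ) :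
    √((p * cos φ) ^ 2 + (p * sin φ) ^ 2) = p := by
  rw [show (p * cos φ) ^ 2 + (p * sin φ) ^ 2 = p ^ 2 by
    linear_combination p ^ 2 * cos_sq_add_sin_sq φ]
  exact sqrt_sq hp

lemma arctan_mul_sin_div_mul_cos {p : ℝ} (hp : p ≠ 0) {φ : ℝ}
    (hφ : φ ∈ Ioo (-(π / 2)) (π / 2)) : arctan (p * sin φ / (p * cos φ)) = φ := by
  rw [mul_div_mul_left _ _ hp, ← tan_eq_sin_div_cos, arctan_tan hφ.1 hφ.2]

noncomputable def halfPlanePolarHomeomorph :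
    Ioo (-(π / 2)) (π / 2) × Ioi (0 : ℝ) ≃ₜ Ioi (0 : ℝ) × ℝ where
  toFun x := (⟨x.2 * cos x.1, mem_Ioi.2 (mul_pos x.2.2 (cos_pos_of_mem_Ioo x.1.2))⟩, x.2 * sin x.1)
  invFun y := (⟨arctan (y.2 / y.1), arctan_mem_Ioo _⟩,
    ⟨√((y.1 : ℝ) ^ 2 + y.2 ^ 2), mem_Ioi.2 (sqrt_pos.2 (add_pos_of_pos_of_nonneg (pow_pos y.1.2 2) (sq_nonneg _)))⟩)
  left_inv := by
    rintro ⟨⟨φ, hφ⟩, ⟨p, hp⟩⟩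
    ext
    · exact arctan_mul_sin_div_mul_cos hp.ne' hφ
    · exact sqrt_mul_cos_sq_add_mul_sin_sq hp.le φ
  right_inv := by
    rintro ⟨⟨R, hR⟩, z⟩
    have hR' : 0 < R := hR
    have hs : 0 < √(1 + (z / R) ^ 2) := sqrt_pos.2 (by positivity)
    ext
    · simp only [cos_arctan, sqrt_sq_add_sq_eq_mul_sqrt_one_add hR']
      field_simp
    · simp only [sin_arctan, sqrt_sq_add_sq_eq_mul_sqrt_one_add hR']
      field_simp
  continuous_toFun := .prodMk (.subtype_mk (by fun_prop) _) (by fun_prop)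
  continuous_invFun :=
    .prodMk (.subtype_mk (continuous_arctan.comp (continuous_snd.div (by fun_prop)
      fun y => (mem_Ioi.1 y.1.2).ne')) _) (.subtype_mk (by fun_prop) _)

namespace Complex

lemma equivRealProdCLM_symm_mul_cos_mul_sin (R : ℝ) (θ : Real.Angle) :
    equivRealProdCLM.symm (R * θ.cos, R * θ.sin) = R * θ.toCircle := by
  rw [equivRealProdCLM_symm_apply, Real.Angle.coe_toCircle]
  push_cast
  ring

lemma norm_equivRealProdCLM_symm_mul_cos_mul_sin {R : ℝ} (hR : 0 ≤ R) (θ : Real.Angle) :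
    ‖equivRealProdCLM.symm (R * θ.cos, R * θ.sin)‖ = R := by
  rw [equivRealProdCLM_symm_mul_cos_mul_sin, norm_mul, Circle.norm_coe, mul_one, norm_real,
    Real.norm_of_nonneg hR]

lemma arg_equivRealProdCLM_symm_mul_cos_mul_sin {R : ℝ} (hR : 0 < R) (θ : Real.Angle) :
    (arg (equivRealProdCLM.symm (R * θ.cos, R * θ.sin)) : Real.Angle) = θ := by
  rw [equivRealProdCLM_symm_mul_cos_mul_sin, arg_real_mul _ hR, Real.Angle.arg_toCircle]

lemma equivRealProdCLM_symm_ne_zero {q : ℝ × ℝ} (hq : q ≠ 0) : equivRealProdCLM.symm q ≠ 0 :=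
  (map_ne_zero_iff _ equivRealProdCLM.symm.injective).2 hq

end Complex

lemma mul_cos_mul_sin_ne_zero {R : ℝ} (hR : 0 < R) (θ : Real.Angle) :
    (R * θ.cos, R * θ.sin) ≠ 0 := fun h => by
  have := Complex.norm_equivRealProdCLM_symm_mul_cos_mul_sin hR.le θ
  rw [h, map_zero, norm_zero] at this
  exact hR.ne this

noncomputable def planePolarHomeomorph : Ioi (0 : ℝ) × Real.Angle ≃ₜ {q : ℝ × ℝ // q ≠ 0} where
  toFun x := ⟨(x.1 * x.2.cos, x.1 * x.2.sin), mul_cos_mul_sin_ne_zero x.1.2 x.2⟩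
  invFun q := (⟨‖Complex.equivRealProdCLM.symm q‖,
    mem_Ioi.2 (norm_pos_iff.2 (Complex.equivRealProdCLM_symm_ne_zero q.2))⟩,
    Complex.arg (Complex.equivRealProdCLM.symm q))
  left_inv := by
    rintro ⟨⟨R, hR⟩, θ⟩
    ext
    · exact Complex.norm_equivRealProdCLM_symm_mul_cos_mul_sin (le_of_lt hR) θ
    · exact Complex.arg_equivRealProdCLM_symm_mul_cos_mul_sin hR θ
  right_inv := by
    rintro ⟨⟨x, y⟩, hq⟩
    ext <;> simp
  continuous_toFun := by
    have hR : Continuous fun x : Ioi (0 : ℝ) × Real.Angle => (x.1 : ℝ) := by fun_prop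
    exact .subtype_mk (.prodMk (hR.mul (Real.Angle.continuous_cos.comp continuous_snd))
      (hR.mul (Real.Angle.continuous_sin.comp continuous_snd))) _
  continuous_invFun := by
    have hz := Complex.equivRealProdCLM.symm.continuous.comp
      (continuous_subtype_val (p := fun q : ℝ × ℝ => q ≠ 0))
    refine .prodMk (.subtype_mk (continuous_norm.comp hz) _)
      (continuous_iff_continuousAt.2 fun q => ?_)
    exact ((Complex.continuousAt_arg_coe_angle (Complex.equivRealProdCLM_symm_ne_zero q.2)).comp
      Complex.equivRealProdCLM.symm.continuous.continuousAt).comp continuous_subtype_val.continuousAt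

noncomputable def neZeroProdHomeomorphE₁ : {q : ℝ × ℝ // q ≠ 0} × ℝ × ℝ ≃ₜ E₁ where
  toFun x := ⟨(x.1.1.1, x.1.1.2, x.2.1, x.2.2), x.1.2⟩
  invFun p := (⟨(p.1.1, p.1.2.1), p.2⟩, p.1.2.2)
  left_inv _ := rfl
  right_inv _ := rfl
  continuous_toFun := .subtype_mk (by fun_prop) _
  continuous_invFun := .prodMk (.subtype_mk (by fun_prop) _) (by fun_prop)

/-- `F₁` is a homeomorphism from `ℝ × 𝕊 × (0,∞) × (0,∞)` onto `E₁`. -/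
theorem stmt5 :
    ∃ e : (ℝ × Real.Angle × Set.Ioi (0 : ℝ) × Set.Ioi (0 : ℝ)) ≃ₜ E₁,
      ∀ x, (e x : ℝ × ℝ × ℝ × ℝ) = F₁ x :=
  ⟨(bulgeAngleHomeomorph.prodCongr ((Homeomorph.refl _).prodCongr mulSqSubSqHomeomorph)).trans <|
    (Homeomorph.prodAssoc _ _ _).symm.trans <| (Homeomorph.prodProdProdComm _ _ _ _).trans <|
    (halfPlanePolarHomeomorph.prodCongr (Homeomorph.refl _)).trans <|
    (Homeomorph.prodProdProdComm _ _ _ _).trans <|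
    (planePolarHomeomorph.prodCongr (Homeomorph.refl _)).trans neZeroProdHomeomorphE₁,
   fun _ => rfl⟩
end

section
/- Let Ω be a nonempty, bounded, open, convex subset of the Euclidean plane ℝ². Then there exists a metric space structure on Ω whose distance function d satisfies: for all x, y ∈ Ω and all points a, b in the frontier of Ω such that x lies in the open segment from a to y and y lies in the open segment from x to b, one has d(x, y) = (1/2)·log( (dist(a,y)·dist(b,x)) / (dist(a,x)·dist(b,y)) ), where dist denotes the Euclidean distance. -/
/-!
The Hilbert metric is the symmetrisation of the Funk metric `F(x, y) = sup_ℓ log (ℓ x / ℓ y)`,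
the supremum running over the continuous affine functions `ℓ` positive on `Ω`. Being a supremum
of differences `log ℓ x - log ℓ y`, `F` satisfies the triangle inequality, and it is finite since
`Ω` is open. If `y` lies between `x` and a boundary point `b`, then `ℓ b ≥ 0` gives
`ℓ y ≥ (|by| / |bx|) ℓ x` for every such `ℓ`, with equality for a supporting functional at `b`
(Hahn–Banach); hence `F(x, y) = log (|bx| / |by|)`, and the two directions add up to the cross
ratio. Since `Ω` is bounded, some affine function positive on `Ω` separates any two points of it,
so the distance is positive.
-/

open Real Set Filter Topology

noncomputable section

theorem dist_ne_zero_of_mem_of_mem_frontier {X : Type*} [MetricSpace X] {Ω : Set X}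
    (hop : IsOpen Ω) {z c : X} (hz : z ∈ Ω) (hc : c ∈ frontier Ω) : dist c z ≠ 0 :=
  dist_ne_zero.2 (ne_of_mem_of_not_mem hz (hop.frontier_eq ▸ hc).2).symm

variable {E : Type*} [NormedAddCommGroup E] [NormedSpace ℝ E] {Ω : Set E}

abbrev PositiveAffineOn (Ω : Set E) : Type _ := {ℓ : E →ᴬ[ℝ] ℝ // ∀ z ∈ Ω, 0 < ℓ z}

instance : Nonempty (PositiveAffineOn Ω) :=
  ⟨⟨ContinuousAffineMap.const ℝ E 1, fun _ _ => one_pos⟩⟩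

def funkDist (Ω : Set E) (x y : E) : ℝ :=
  ⨆ ℓ : PositiveAffineOn Ω, (log (ℓ.1 x) - log (ℓ.1 y))

theorem exists_pos_add_smul_sub_mem (hop : IsOpen Ω) {y : E} (hy : y ∈ Ω) (x : E) :
    ∃ s : ℝ, 0 < s ∧ y + s • (y - x) ∈ Ω := by
  have hcont : Continuous fun s : ℝ => y + s • (y - x) := by fun_prop
  have hnhds : ∀ᶠ s in 𝓝[>] (0 : ℝ), y + s • (y - x) ∈ Ω :=
    nhdsWithin_le_nhds (hcont.continuousAt.preimage_mem_nhds (by simpa using hop.mem_nhds hy))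
  obtain ⟨s, hsΩ, hs⟩ := (hnhds.and self_mem_nhdsWithin).exists
  exact ⟨s, hs, hsΩ⟩

theorem ContinuousAffineMap.apply_combo (ℓ : E →ᴬ[ℝ] ℝ) {u v : ℝ} (huv : u + v = 1) (x b : E) :
    ℓ (u • x + v • b) = u * ℓ x + v * ℓ b :=
  Convex.combo_affine_apply (f := (ℓ : E →ᵃ[ℝ] ℝ)) huv

theorem bddAbove_range_log_sub_log (hop : IsOpen Ω) {x y : E} (hx : x ∈ Ω) (hy : y ∈ Ω) :
    BddAbove (range fun ℓ : PositiveAffineOn Ω => log (ℓ.1 x) - log (ℓ.1 y)) := by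
  obtain ⟨s, hs, hzΩ⟩ := exists_pos_add_smul_sub_mem hop hy x
  refine ⟨log (1 + s) - log s, ?_⟩
  rintro _ ⟨⟨ℓ, hℓ⟩, rfl⟩
  have hcombo : y + s • (y - x) = (1 + s) • y + (-s) • x := by module
  have hℓz : 0 < (1 + s) * ℓ y + -s * ℓ x := by
    rw [← ℓ.apply_combo (by ring), ← hcombo]; exact hℓ _ hzΩ
  have := log_le_log (mul_pos hs (hℓ x hx)) (by linarith : s * ℓ x ≤ (1 + s) * ℓ y)
  rw [log_mul hs.ne' (hℓ x hx).ne', log_mul (by positivity) (hℓ y hy).ne'] at this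
  linarith

theorem log_sub_log_le_funkDist (hop : IsOpen Ω) {x y : E} (hx : x ∈ Ω) (hy : y ∈ Ω)
    (ℓ : PositiveAffineOn Ω) : log (ℓ.1 x) - log (ℓ.1 y) ≤ funkDist Ω x y :=
  le_ciSup (bddAbove_range_log_sub_log hop hx hy) ℓ

theorem funkDist_self (x : E) : funkDist Ω x x = 0 := by
  simp [funkDist]

theorem funkDist_nonneg (hop : IsOpen Ω) {x y : E} (hx : x ∈ Ω) (hy : y ∈ Ω) :
    0 ≤ funkDist Ω x y := by
  simpa using log_sub_log_le_funkDist hop hx hy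
    ⟨ContinuousAffineMap.const ℝ E 1, fun _ _ => one_pos⟩

theorem funkDist_triangle (hop : IsOpen Ω) {x y z : E} (hx : x ∈ Ω) (hy : y ∈ Ω) (hz : z ∈ Ω) :
    funkDist Ω x z ≤ funkDist Ω x y + funkDist Ω y z :=
  ciSup_le fun ℓ => by
    linarith [log_sub_log_le_funkDist hop hx hy ℓ, log_sub_log_le_funkDist hop hy hz ℓ]

theorem funkDist_pos (hbd : Bornology.IsBounded Ω) (hop : IsOpen Ω) {x y : E}
    (hx : x ∈ Ω) (hy : y ∈ Ω) (hxy : x ≠ y) : 0 < funkDist Ω x y := by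
  obtain ⟨f, hf⟩ := geometric_hahn_banach_point_point hxy.symm
  obtain ⟨C, hC⟩ := (f.lipschitz.isBounded_image hbd).bddBelow
  have hℓ : ∀ z ∈ Ω, 0 < f z + (1 - C) := fun z hz => by
    linarith [hC (mem_image_of_mem f hz)]
  let ℓ : PositiveAffineOn Ω :=
    ⟨f.toContinuousAffineMap + ContinuousAffineMap.const ℝ E (1 - C), hℓ⟩
  calc 0 < log (ℓ.1 x) - log (ℓ.1 y) :=
        sub_pos.2 (log_lt_log (hℓ y hy) (by simpa [ℓ] using hf))
    _ ≤ funkDist Ω x y := log_sub_log_le_funkDist hop hx hy ℓ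

theorem funkDist_eq_log_div (hop : IsOpen Ω) (hconv : Convex ℝ Ω) {x y b : E}
    (hx : x ∈ Ω) (hy : y ∈ Ω) (hb : b ∈ frontier Ω) (hyb : y ∈ openSegment ℝ x b) :
    funkDist Ω x y = log (dist b x / dist b y) := by
  have hbx := dist_ne_zero_of_mem_of_mem_frontier hop hx hb
  rw [hop.frontier_eq] at hb
  obtain ⟨u, v, hu, hv, huv, rfl⟩ := hyb
  have hdist : dist b (u • x + v • b) = u * dist b x := by
    obtain rfl : v = 1 - u := by linarith
    rw [dist_eq_norm, dist_eq_norm, show b - (u • x + (1 - u) • b) = u • (b - x) by module,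
      norm_smul, Real.norm_of_nonneg hu.le]
  rw [hdist, div_mul_cancel_right₀ hbx, log_inv]
  refine le_antisymm (ciSup_le fun ⟨ℓ, hℓ⟩ => ?_) ?_
  · have hℓb : 0 ≤ ℓ b := closure_minimal (fun z hz => (hℓ z hz).le)
      (isClosed_le continuous_const ℓ.cont) hb.1
    have hℓy : u * ℓ x ≤ ℓ (u • x + v • b) := by
      rw [ℓ.apply_combo huv]; nlinarith
    have := log_le_log (mul_pos hu (hℓ x hx)) hℓy
    rw [log_mul hu.ne' (hℓ x hx).ne'] at this
    show log (ℓ x) - log (ℓ _) ≤ _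
    linarith
  · obtain ⟨f, hf⟩ := geometric_hahn_banach_open_point hconv hop hb.2
    have hℓ : ∀ z ∈ Ω, 0 < f b - f z := fun z hz => sub_pos.2 (hf z hz)
    let ℓ : PositiveAffineOn Ω :=
      ⟨ContinuousAffineMap.const ℝ E (f b) - f.toContinuousAffineMap, hℓ⟩
    have hℓy : ℓ.1 (u • x + v • b) = u * ℓ.1 x := by
      rw [ℓ.1.apply_combo huv]; simp [ℓ]
    have := log_sub_log_le_funkDist hop hx hy ℓ
    rw [hℓy, log_mul hu.ne' (ℓ.2 x hx).ne'] at this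
    linarith

def hilbertDist (Ω : Set E) (x y : E) : ℝ := (funkDist Ω x y + funkDist Ω y x) / 2

abbrev hilbertMetricSpace (hbd : Bornology.IsBounded Ω) (hop : IsOpen Ω) : MetricSpace Ω where
  dist x y := hilbertDist Ω x y
  dist_self x := by simp [hilbertDist, funkDist_self]
  dist_comm x y := by simp only [hilbertDist, add_comm]
  dist_triangle x y z := by
    simp only [hilbertDist]
    linarith [funkDist_triangle hop x.2 y.2 z.2, funkDist_triangle hop z.2 y.2 x.2]
  eq_of_dist_eq_zero {x y} h := by
    by_contra hxy
    simp only [hilbertDist] at h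
    linarith [funkDist_pos hbd hop x.2 y.2 (Subtype.coe_injective.ne hxy),
      funkDist_nonneg hop y.2 x.2]

theorem hilbertDist_eq_half_log_crossRatio (hop : IsOpen Ω) (hconv : Convex ℝ Ω) {x y a b : E}
    (hx : x ∈ Ω) (hy : y ∈ Ω) (ha : a ∈ frontier Ω) (hb : b ∈ frontier Ω)
    (hxa : x ∈ openSegment ℝ a y) (hyb : y ∈ openSegment ℝ x b) :
    hilbertDist Ω x y = 1 / 2 * log (dist a y * dist b x / (dist a x * dist b y)) := by
  have hdist : ∀ {z c}, z ∈ Ω → c ∈ frontier Ω → dist c z ≠ 0 :=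
    dist_ne_zero_of_mem_of_mem_frontier hop
  rw [hilbertDist, funkDist_eq_log_div hop hconv hx hy hb hyb,
    funkDist_eq_log_div hop hconv hy hx ha (openSegment_symm ℝ a y ▸ hxa), mul_div_mul_comm,
    log_mul (div_ne_zero (hdist hy ha) (hdist hx ha)) (div_ne_zero (hdist hx hb) (hdist hy hb))]
  ring

end

theorem stmt9_general (Ω : Set (EuclideanSpace ℝ (Fin 2)))
    (hbd : Bornology.IsBounded Ω) (hop : IsOpen Ω) (hconv : Convex ℝ Ω) :
    ∃ m : MetricSpace ↥Ω,
      ∀ (x y : ↥Ω) (a b : EuclideanSpace ℝ (Fin 2)),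
        a ∈ frontier Ω → b ∈ frontier Ω →
        (x : EuclideanSpace ℝ (Fin 2)) ∈ openSegment ℝ a (y : EuclideanSpace ℝ (Fin 2)) →
        (y : EuclideanSpace ℝ (Fin 2)) ∈ openSegment ℝ (x : EuclideanSpace ℝ (Fin 2)) b →
        @dist ↥Ω m.toPseudoMetricSpace.toDist x y =
          (1 / 2) * Real.log
            ((dist a (y : EuclideanSpace ℝ (Fin 2)) * dist b (x : EuclideanSpace ℝ (Fin 2))) /
             (dist a (x : EuclideanSpace ℝ (Fin 2)) * dist b (y : EuclideanSpace ℝ (Fin 2)))) :=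
  ⟨hilbertMetricSpace hbd hop, fun x y _ _ ha hb hxa hyb =>
    hilbertDist_eq_half_log_crossRatio hop hconv x.2 y.2 ha hb hxa hyb⟩

theorem stmt9 (Ω : Set (EuclideanSpace ℝ (Fin 2))) (hne : Ω.Nonempty)
    (hbd : Bornology.IsBounded Ω) (hop : IsOpen Ω) (hconv : Convex ℝ Ω) :
    ∃ m : MetricSpace ↥Ω,
      ∀ (x y : ↥Ω) (a b : EuclideanSpace ℝ (Fin 2)),
        a ∈ frontier Ω → b ∈ frontier Ω →
        (x : EuclideanSpace ℝ (Fin 2)) ∈ openSegment ℝ a (y : EuclideanSpace ℝ (Fin 2)) →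
        (y : EuclideanSpace ℝ (Fin 2)) ∈ openSegment ℝ (x : EuclideanSpace ℝ (Fin 2)) b →
        @dist ↥Ω m.toPseudoMetricSpace.toDist x y =
          (1 / 2) * Real.log
            ((dist a (y : EuclideanSpace ℝ (Fin 2)) * dist b (x : EuclideanSpace ℝ (Fin 2))) /
             (dist a (x : EuclideanSpace ℝ (Fin 2)) * dist b (y : EuclideanSpace ℝ (Fin 2)))) :=
  stmt9_general Ω hbd hop hconv
end

section
/- Let Ω be a nonempty, bounded, open, convex subset of the Euclidean plane ℝ², and let d be any metric on Ω satisfying: for all x, y ∈ Ω and all a, b in the frontier of Ω with x in the open segment from a to y and y in the open segment from x to b, d(x,y) = (1/2)·log( (dist(a,y)·dist(b,x)) / (dist(a,x)·dist(b,y)) ). Then for all x, y, z ∈ Ω with y lying in the open segment from x to z, one has d(x, z) = d(x, y) + d(y, z). -/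
/-! Let `a` and `b` be the points where the line through `x` and `z` leaves `Ω` behind `x` and
beyond `z`. This single pair of boundary points computes all three distances `d(x, z)`, `d(x, y)`
and `d(y, z)`, and for fixed `a`, `b` the cross ratios are multiplicative,
`[a, x, y, b] * [a, y, z, b] = [a, x, z, b]`, so their logarithms add. -/

open Set AffineMap Bornology

theorem IsOpen.exists_gt_mem_frontier {α : Type*} [ConditionallyCompleteLinearOrder α]
    [TopologicalSpace α] [OrderTopology α] [DenselyOrdered α] [NoMaxOrder α]
    {S : Set α} (hS : IsOpen S) (hbdd : BddAbove S) {t : α} (ht : t ∈ S) :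
    ∃ T, t < T ∧ T ∈ frontier S := by
  have hsup : sSup S ∉ S := fun hmem ↦ by
    obtain ⟨u, hu, huS⟩ := Filter.Eventually.exists_gt (hS.mem_nhds hmem)
    exact (le_csSup hbdd huS).not_gt hu
  refine ⟨sSup S, (le_csSup hbdd ht).lt_of_ne (ne_of_mem_of_not_mem ht hsup), ?_⟩
  rw [hS.frontier_eq]
  exact ⟨csSup_mem_closure ⟨t, ht⟩ hbdd, hsup⟩

section CrossRatio

variable {P : Type*} [MetricSpace P]

noncomputable def crossRatio (a x y b : P) : ℝ := dist a y * dist b x / (dist a x * dist b y)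

theorem crossRatio_mul_crossRatio {a x y z b : P} (hay : a ≠ y) (hby : b ≠ y) :
    crossRatio a x y b * crossRatio a y z b = crossRatio a x z b := by
  have := dist_pos.2 hay
  have := dist_pos.2 hby
  unfold crossRatio
  field_simp

theorem crossRatio_ne_zero {a x y b : P} (hax : a ≠ x) (hay : a ≠ y) (hbx : b ≠ x)
    (hby : b ≠ y) : crossRatio a x y b ≠ 0 := by
  have := dist_pos.2 hax
  have := dist_pos.2 hay
  have := dist_pos.2 hbx
  have := dist_pos.2 hby
  unfold crossRatio
  positivity

theorem log_crossRatio_add {a x y z b : P} (hax : a ≠ x) (hay : a ≠ y) (haz : a ≠ z)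
    (hbx : b ≠ x) (hby : b ≠ y) (hbz : b ≠ z) :
    Real.log (crossRatio a x z b) =
      Real.log (crossRatio a x y b) + Real.log (crossRatio a y z b) := by
  rw [← crossRatio_mul_crossRatio hay hby, Real.log_mul (crossRatio_ne_zero hax hay hbx hby)
    (crossRatio_ne_zero hay haz hby hbz)]

end CrossRatio

theorem lineMap_mem_openSegment_lineMap {V : Type*} [AddCommGroup V] [Module ℝ V] (x z : V)
    {r s u : ℝ} (hrs : r < s) (hsu : s < u) :
    lineMap x z s ∈ openSegment ℝ (lineMap x z r) (lineMap x z u) := by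
  rw [← image_openSegment ℝ (lineMap x z), openSegment_eq_Ioo (hrs.trans hsu)]
  exact mem_image_of_mem _ ⟨hrs, hsu⟩

section Line

variable {E : Type*} [NormedAddCommGroup E] [NormedSpace ℝ E]

theorem isBounded_preimage_lineMap {Ω : Set E} (hΩ : IsBounded Ω) {x z : E} (hxz : x ≠ z) :
    IsBounded (lineMap x z ⁻¹' Ω : Set ℝ) := by
  refine AntilipschitzWith.isBounded_preimage
    (AntilipschitzWith.of_le_mul_dist (K := (nndist x z)⁻¹) fun s t ↦ ?_) hΩ
  rw [dist_lineMap_lineMap, NNReal.coe_inv, coe_nndist, mul_comm (dist s t),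
    inv_mul_cancel_left₀ (dist_ne_zero.2 hxz)]

theorem exists_gt_lineMap_mem_frontier {Ω : Set E} (hbd : IsBounded Ω) (hop : IsOpen Ω)
    {x z : E} (hxz : x ≠ z) {t : ℝ} (ht : lineMap x z t ∈ Ω) :
    ∃ T, t < T ∧ lineMap x z T ∈ frontier Ω := by
  have hcont : Continuous (lineMap x z : ℝ → E) := lineMap_continuous
  obtain ⟨T, htT, hT⟩ := (hop.preimage hcont).exists_gt_mem_frontier
    (isBounded_preimage_lineMap hbd hxz).bddAbove ht
  exact ⟨T, htT, hcont.frontier_preimage_subset Ω hT⟩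

theorem exists_lt_lineMap_mem_frontier {Ω : Set E} (hbd : IsBounded Ω) (hop : IsOpen Ω)
    {x z : E} (hxz : x ≠ z) {t : ℝ} (ht : lineMap x z t ∈ Ω) :
    ∃ A, A < t ∧ lineMap x z A ∈ frontier Ω := by
  obtain ⟨T, htT, hT⟩ := exists_gt_lineMap_mem_frontier hbd hop hxz.symm (t := 1 - t)
    (by rwa [lineMap_apply_one_sub])
  exact ⟨1 - T, by linarith, by rwa [lineMap_apply_one_sub]⟩

end Line

theorem stmt10_general (Ω : Set (EuclideanSpace ℝ (Fin 2)))
    (hbd : Bornology.IsBounded Ω) (hop : IsOpen Ω)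
    (m : MetricSpace ↥Ω)
    (hdist : ∀ (x y : ↥Ω) (a b : EuclideanSpace ℝ (Fin 2)),
      a ∈ frontier Ω → b ∈ frontier Ω →
      (x : EuclideanSpace ℝ (Fin 2)) ∈ openSegment ℝ a (y : EuclideanSpace ℝ (Fin 2)) →
      (y : EuclideanSpace ℝ (Fin 2)) ∈ openSegment ℝ (x : EuclideanSpace ℝ (Fin 2)) b →
      @dist ↥Ω m.toPseudoMetricSpace.toDist x y =
        (1 / 2) * Real.log
          ((dist a (y : EuclideanSpace ℝ (Fin 2)) * dist b (x : EuclideanSpace ℝ (Fin 2))) /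
           (dist a (x : EuclideanSpace ℝ (Fin 2)) * dist b (y : EuclideanSpace ℝ (Fin 2))))) :
    ∀ x y z : ↥Ω,
      (y : EuclideanSpace ℝ (Fin 2)) ∈
        openSegment ℝ (x : EuclideanSpace ℝ (Fin 2)) (z : EuclideanSpace ℝ (Fin 2)) →
      @dist ↥Ω m.toPseudoMetricSpace.toDist x z =
        @dist ↥Ω m.toPseudoMetricSpace.toDist x y +
        @dist ↥Ω m.toPseudoMetricSpace.toDist y z := by
  intro x y z hy
  rcases eq_or_ne (x : EuclideanSpace ℝ (Fin 2)) z with hxz | hxz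
  · obtain rfl : x = z := Subtype.ext hxz
    obtain rfl : y = x := Subtype.ext (by simpa using hy)
    simp
  rw [openSegment_eq_image_lineMap] at hy
  obtain ⟨s, ⟨hs0, hs1⟩, hys⟩ := hy
  obtain ⟨A, hA, ha⟩ := exists_lt_lineMap_mem_frontier hbd hop hxz (t := 0) (by simp)
  obtain ⟨T, hT, hb⟩ := exists_gt_lineMap_mem_frontier hbd hop hxz (t := 1) (by simp)
  have hseg {r s u : ℝ} (hrs : r < s) (hsu : s < u) :
      lineMap (x : EuclideanSpace ℝ (Fin 2)) z s ∈
        openSegment ℝ (lineMap (x : EuclideanSpace ℝ (Fin 2)) z r)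
          (lineMap (x : EuclideanSpace ℝ (Fin 2)) z u) :=
    lineMap_mem_openSegment_lineMap _ _ hrs hsu
  have hfrontier_ne {p : EuclideanSpace ℝ (Fin 2)} (w : ↥Ω) (hp : p ∈ frontier Ω) : p ≠ w :=
    fun hpw ↦ hop.inter_frontier_eq.subset ⟨hpw ▸ w.2, hp⟩
  rw [hdist x z _ _ ha hb (by simpa using hseg hA one_pos) (by simpa using hseg one_pos hT),
    hdist x y _ _ ha hb (by simpa [hys] using hseg hA hs0)
      (by simpa [hys] using hseg hs0 (hs1.trans hT)),
    hdist y z _ _ ha hb (by simpa [hys] using hseg (hA.trans hs0) hs1)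
      (by simpa [hys] using hseg hs1 hT),
    ← mul_add]
  exact congrArg _
    (log_crossRatio_add (hfrontier_ne x ha) (hfrontier_ne y ha) (hfrontier_ne z ha) (hfrontier_ne x hb) (hfrontier_ne y hb) (hfrontier_ne z hb))

theorem stmt10 (Ω : Set (EuclideanSpace ℝ (Fin 2))) (hne : Ω.Nonempty)
    (hbd : Bornology.IsBounded Ω) (hop : IsOpen Ω) (hconv : Convex ℝ Ω)
    (m : MetricSpace ↥Ω)
    (hdist : ∀ (x y : ↥Ω) (a b : EuclideanSpace ℝ (Fin 2)),
      a ∈ frontier Ω → b ∈ frontier Ω →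
      (x : EuclideanSpace ℝ (Fin 2)) ∈ openSegment ℝ a (y : EuclideanSpace ℝ (Fin 2)) →
      (y : EuclideanSpace ℝ (Fin 2)) ∈ openSegment ℝ (x : EuclideanSpace ℝ (Fin 2)) b →
      @dist ↥Ω m.toPseudoMetricSpace.toDist x y =
        (1 / 2) * Real.log
          ((dist a (y : EuclideanSpace ℝ (Fin 2)) * dist b (x : EuclideanSpace ℝ (Fin 2))) /
           (dist a (x : EuclideanSpace ℝ (Fin 2)) * dist b (y : EuclideanSpace ℝ (Fin 2))))) :
    ∀ x y z : ↥Ω,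
      (y : EuclideanSpace ℝ (Fin 2)) ∈
        openSegment ℝ (x : EuclideanSpace ℝ (Fin 2)) (z : EuclideanSpace ℝ (Fin 2)) →
      @dist ↥Ω m.toPseudoMetricSpace.toDist x z =
        @dist ↥Ω m.toPseudoMetricSpace.toDist x y +
        @dist ↥Ω m.toPseudoMetricSpace.toDist y z :=
  stmt10_general Ω hbd hop m hdist
end
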